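/- arXiv:2311.09295 — 9 statements merged into one kernel-verified Lean document; each statement's English description precedes it below -/
import Mathlib

section
/- Let L be a real number and let τ ∈ ℂ satisfy Im τ > 0 and Im τ > L/2. If v₁, v₂ ∈ ℤ[i] are Gaussian integers (regarded as complex numbers) satisfying the self-duality relation v₁·conj(τ) = v₂ and the tadpole bound ‖v‖²_τ := |v₁|²·Im τ + |v₂ − v₁·Re τ|²/Im τ ≤ L, then v₁ = 0 and v₂ = 0. (No non-trivial self-dual flux satisfies the tadpole bound beyond the critical value of Im τ; paper §3.1.) -/
/-! Self-duality gives `v₂ - v₁ Re τ = -i v₁ Im τ`, so the Hodge norm of a self-dual flux is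
`2 |v₁|² Im τ`. Beyond the critical value the tadpole bound then forces `|v₁|² < 1`, and the only
Gaussian integer of norm less than one is `0`. -/

open Complex ComplexConjugate

lemma Complex.norm_conj_sub_re (z : ℂ) : ‖conj z - z.re‖ = |z.im| := by
  have : conj z - z.re = -(z.im * I) := by
    apply Complex.ext <;> simp
  rw [this, norm_neg, norm_mul, norm_I, mul_one, norm_real, Real.norm_eq_abs]

lemma hodgeNormSq_of_selfDual (τ v₁ v₂ : ℂ) (hsd : v₁ * conj τ = v₂) :
    ‖v₁‖ ^ 2 * τ.im + ‖v₂ - v₁ * τ.re‖ ^ 2 / τ.im = 2 * ‖v₁‖ ^ 2 * τ.im := by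
  have hdiff : v₂ - v₁ * τ.re = v₁ * (conj τ - τ.re) := by rw [mul_sub, hsd]
  rw [hdiff, norm_mul, Complex.norm_conj_sub_re, mul_pow, sq_abs, mul_div_assoc, sq τ.im,
    mul_self_div_self]
  ring

lemma GaussianInt.one_le_sq_norm_toComplex {x : GaussianInt} (hx : x ≠ 0) : 1 ≤ ‖(x : ℂ)‖ ^ 2 := by
  have : (1 : ℝ) ≤ x.norm := by exact_mod_cast GaussianInt.norm_pos.mpr hx
  rwa [GaussianInt.intCast_real_norm, ← Complex.sq_norm] at this

/-- Beyond the critical value of `Im τ` determined by the tadpole bound `L`, the only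
Gaussian-integer flux `(v₁, v₂)` on the rigid `Y₃ × T²` compactification that satisfies
both the self-duality relation `v₁ * conj τ = v₂` and the tadpole bound
`|v₁|² Im τ + |v₂ - v₁ Re τ|² / Im τ ≤ L` is the trivial one. -/
theorem tadpole_selfdual_trivial_beyond_critical
    (L : ℝ) (τ : ℂ) (hτ : 0 < τ.im) (hcrit : L / 2 < τ.im)
    (v₁ v₂ : GaussianInt)
    (hsd : (v₁ : ℂ) * (starRingEnd ℂ) τ = (v₂ : ℂ))
    (htad : ‖(v₁ : ℂ)‖ ^ 2 * τ.im
        + ‖(v₂ : ℂ) - (v₁ : ℂ) * (τ.re : ℂ)‖ ^ 2 / τ.im ≤ L) :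
    v₁ = 0 ∧ v₂ = 0 := by
  rw [hodgeNormSq_of_selfDual τ _ _ hsd] at htad
  have hv₁ : v₁ = 0 := by
    by_contra hne
    nlinarith [GaussianInt.one_le_sq_norm_toComplex hne]
  refine ⟨hv₁, ?_⟩
  rw [← GaussianInt.toComplex_eq_zero, ← hsd, hv₁, GaussianInt.toComplex_zero, zero_mul]
end

section
/- For every real number L and every c > 0, the set of pairs (v₁, v₂) ∈ ℤ[i] × ℤ[i] of Gaussian integers for which there exists τ ∈ ℂ with Im τ ≥ c, 0 ≤ Re τ ≤ 1, v₁·conj(τ) = v₂, and ‖v‖²_τ := |v₁|²·Im τ + |v₂ − v₁·Re τ|²/Im τ ≤ L, is finite. (Finiteness of self-dual flux vacua with bounded tadpole on the rigid Y₃ × T² compactification; paper §3.1.) -/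
/-!
On a self-dual flux `v₂ = v₁ · τ̄` one has `v₂ - v₁ Re τ = -i v₁ Im τ`, so the Hodge norm collapses
to `2 |v₁|² Im τ`. With `Im τ ≥ c` this bounds `|v₁|²`, hence `|v₁|`, since a nonzero Gaussian
integer has norm at least `1`; and `|v₂| = |v₁| |τ| ≤ |v₁| + |v₁|² Im τ` is then bounded as well.
Only finitely many Gaussian integers lie in a disc.
-/

open Complex ComplexConjugate

namespace GaussianInt

theorem norm_toComplex_le_sq (x : GaussianInt) : ‖(x : ℂ)‖ ≤ ‖(x : ℂ)‖ ^ 2 := by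
  rcases eq_or_ne x 0 with rfl | hx
  · simp
  have hnormSq : (1 : ℝ) ≤ ‖(x : ℂ)‖ ^ 2 := by
    rw [Complex.sq_norm, ← intCast_real_norm]
    exact_mod_cast norm_pos.mpr hx
  exact le_self_pow₀ ((one_le_sq_iff₀ (_root_.norm_nonneg _)).mp hnormSq) two_ne_zero

theorem finite_setOf_norm_toComplex_le (R : ℝ) : {x : GaussianInt | ‖(x : ℂ)‖ ≤ R}.Finite := by
  set N := ⌈R⌉
  have mem_Icc_of_abs_le {n : ℤ} (h : |(n : ℝ)| ≤ R) : n ∈ Set.Icc (-N) N := by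
    rw [Set.mem_Icc, ← abs_le]
    exact_mod_cast h.trans (Int.le_ceil R)
  have hinj : Function.Injective fun x : GaussianInt => (x.re, x.im) :=
    fun x y h => Zsqrtd.ext_iff.mpr (Prod.ext_iff.mp h)
  refine (((Set.finite_Icc (-N) N).prod (Set.finite_Icc (-N) N)).preimage hinj.injOn).subset ?_
  intro x hx
  exact ⟨mem_Icc_of_abs_le ((intCast_re x ▸ abs_re_le_norm _).trans hx),
    mem_Icc_of_abs_le ((intCast_im x ▸ abs_im_le_norm _).trans hx)⟩

end GaussianInt

theorem norm_mul_conj_sub_mul_re (v τ : ℂ) : ‖v * conj τ - v * τ.re‖ = ‖v‖ * |τ.im| := by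
  have : v * conj τ - v * τ.re = v * (-(τ.im * I)) := by
    apply Complex.ext <;> simp
  simp [this]

noncomputable def hodgeNormSq (τ v₁ v₂ : ℂ) : ℝ :=
  ‖v₁‖ ^ 2 * τ.im + ‖v₂ - v₁ * τ.re‖ ^ 2 / τ.im

theorem hodgeNormSq_mul_conj (τ v : ℂ) (hτ : 0 < τ.im) :
    hodgeNormSq τ v (v * conj τ) = 2 * (‖v‖ ^ 2 * τ.im) := by
  rw [hodgeNormSq, norm_mul_conj_sub_mul_re, abs_of_pos hτ]
  field_simp
  ring

theorem norm_mul_conj_le (v τ : ℂ) (hre₀ : 0 ≤ τ.re) (hre₁ : τ.re ≤ 1) :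
    ‖v * conj τ‖ ≤ ‖v‖ + ‖v‖ * |τ.im| := by
  calc ‖v * conj τ‖ = ‖v‖ * ‖τ‖ := by rw [norm_mul, norm_conj]
    _ ≤ ‖v‖ * (|τ.re| + |τ.im|) := by gcongr; exact norm_le_abs_re_add_abs_im τ
    _ ≤ ‖v‖ + ‖v‖ * |τ.im| := by
      rw [abs_of_nonneg hre₀]; nlinarith [norm_nonneg v]

/-- Finiteness of self-dual flux vacua with bounded tadpole on the rigid `Y₃ × T²`
compactification: for any tadpole bound `L` and any cutoff `c > 0`, only finitely many
pairs of Gaussian-integer fluxes `(v₁, v₂)` admit a Teichmüller parameter `τ` with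
`Im τ ≥ c`, `0 ≤ Re τ ≤ 1`, satisfying the self-duality relation `v₁ * conj τ = v₂`
and the tadpole bound `|v₁|² Im τ + |v₂ - v₁ Re τ|² / Im τ ≤ L`. -/
theorem finiteness_selfdual_flux_torus
    (L c : ℝ) (hc : 0 < c) :
    {p : GaussianInt × GaussianInt | ∃ τ : ℂ,
      c ≤ τ.im ∧ 0 ≤ τ.re ∧ τ.re ≤ 1 ∧
      (p.1 : ℂ) * (starRingEnd ℂ) τ = (p.2 : ℂ) ∧
      ‖(p.1 : ℂ)‖ ^ 2 * τ.im
        + ‖(p.2 : ℂ) - (p.1 : ℂ) * (τ.re : ℂ)‖ ^ 2 / τ.im ≤ L}.Finite := by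
  refine ((GaussianInt.finite_setOf_norm_toComplex_le (L / (2 * c))).prod
    (GaussianInt.finite_setOf_norm_toComplex_le (L / (2 * c) + L / 2))).subset ?_
  rintro ⟨v₁, v₂⟩ ⟨τ, hcτ, hre₀, hre₁, hselfDual, hL : hodgeNormSq τ v₁ v₂ ≤ L⟩
  have hτ : 0 < τ.im := hc.trans_le hcτ
  rw [← hselfDual, hodgeNormSq_mul_conj _ _ hτ] at hL
  have hv₁ : ‖(v₁ : ℂ)‖ ≤ L / (2 * c) := by
    rw [le_div_iff₀ (by positivity)]
    nlinarith [GaussianInt.norm_toComplex_le_sq v₁, sq_nonneg ‖(v₁ : ℂ)‖]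
  refine ⟨hv₁, ?_⟩
  calc ‖(v₂ : ℂ)‖ ≤ ‖(v₁ : ℂ)‖ + ‖(v₁ : ℂ)‖ * |τ.im| :=
        hselfDual ▸ norm_mul_conj_le _ _ hre₀ hre₁
    _ ≤ L / (2 * c) + L / 2 := by
      rw [abs_of_pos hτ]
      nlinarith [GaussianInt.norm_toComplex_le_sq v₁]
end

section
/- In the one-variable Sl(2)-orbit setting: let L ∈ ℝ and y ≥ 1 with λ²·y > L. If v ∈ Λ is self-dual at y and satisfies the tadpole bound L at y, then P_ℓ v = 0 for every ℓ ≠ 0 and C v = v (so v = P₀ v is a weight-zero, C-invariant flux). (Beyond a critical value of the saxion, determined by the tadpole bound, only weight-zero self-dual fluxes survive; paper §6.1.) -/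
/-!
A nonzero component `P ℓ v` of a lattice vector has norm at least `λ`, so for `ℓ ≥ 1` its
term in the tadpole sum is at least `λ² y^ℓ ≥ λ² y > L`; hence all positive-weight
components vanish. Self-duality `y^ℓ P_ℓ v = C (P_{-ℓ} v)` with `C` injective transports
this to the negative weights, and at weight zero it reads `C (P₀ v) = P₀ v`.
-/

/-- `∑ᶠ` of an infinitely supported family is `0` by convention, and `P ℓ 0 = 0`. -/
theorem finite_support_apply_of_finsum_eq_self {ι R V : Type*} [Semiring R] [AddCommMonoid V]
    [Module R V] {P : ι → V →ₗ[R] V} (hP : ∀ v, ∑ᶠ ℓ, P ℓ v = v) (v : V) :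
    (Function.support fun ℓ => P ℓ v).Finite := by
  by_contra hinf
  have hv : v = 0 := by rw [← hP v, finsum_of_infinite_support hinf]
  simp [hv] at hinf

theorem eq_apply_of_finsum_eq_self {ι R V : Type*} [Semiring R] [AddCommMonoid V] [Module R V]
    {P : ι → V →ₗ[R] V} (hP : ∀ v, ∑ᶠ ℓ, P ℓ v = v) {v : V} {i : ι}
    (h : ∀ ℓ, ℓ ≠ i → P ℓ v = 0) : v = P i v := by
  conv_lhs => rw [← hP v]
  exact finsum_eq_single (fun ℓ => P ℓ v) i h

section SelfDual

variable {V : Type*} [NormedAddCommGroup V] [NormedSpace ℝ V]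

def IsSelfDual (P : ℤ → V →ₗ[ℝ] V) (C : V →ₗ[ℝ] V) (y : ℝ) (v : V) : Prop :=
  ∀ ℓ : ℤ, y ^ ℓ • P ℓ v = C (P (-ℓ) v)

noncomputable def tadpole (P : ℤ → V →ₗ[ℝ] V) (y : ℝ) (v : V) : ℝ :=
  ∑ᶠ ℓ : ℤ, y ^ ℓ * ‖P ℓ v‖ ^ 2

variable {P : ℤ → V →ₗ[ℝ] V} {C : V →ₗ[ℝ] V} {y : ℝ} {v : V}

theorem IsSelfDual.apply_eq_zero_of_apply_neg_eq_zero (hsd : IsSelfDual P C y v)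
    (hC : Function.Injective C) {ℓ : ℤ} (h : P (-ℓ) v = 0) : P ℓ v = 0 := by
  have hCℓ : C (P ℓ v) = C 0 := by
    rw [← neg_neg ℓ, ← hsd (-ℓ), h, smul_zero, map_zero]
  exact hC hCℓ

theorem IsSelfDual.map_apply_zero (hsd : IsSelfDual P C y v) : C (P 0 v) = P 0 v := by
  simpa using (hsd 0).symm

theorem zpow_mul_norm_sq_le_tadpole (hy : 0 < y) (hfin : (Function.support fun ℓ => P ℓ v).Finite)
    (ℓ : ℤ) : y ^ ℓ * ‖P ℓ v‖ ^ 2 ≤ tadpole P y v := by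
  refine single_le_finsum (f := fun j => y ^ j * ‖P j v‖ ^ 2) ℓ (hfin.subset ?_)
    fun j => by positivity
  intro j hj
  simp_all

end SelfDual

theorem eq_zero_of_zpow_mul_norm_sq_lt {V : Type*} [NormedAddCommGroup V] {x : V}
    {lam y : ℝ} {ℓ : ℤ} (hgap : x = 0 ∨ lam ≤ ‖x‖) (hlam : 0 < lam) (hy : 1 ≤ y) (hℓ : 1 ≤ ℓ)
    (h : y ^ ℓ * ‖x‖ ^ 2 < lam ^ 2 * y) : x = 0 := by
  refine hgap.resolve_right fun hx => h.not_ge ?_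
  have hyℓ : y ≤ y ^ ℓ := by simpa using zpow_le_zpow_right₀ hy hℓ
  calc lam ^ 2 * y ≤ ‖x‖ ^ 2 * y ^ ℓ := by gcongr
    _ = y ^ ℓ * ‖x‖ ^ 2 := mul_comm _ _

theorem selfdual_weight_zero_beyond_critical_general
    (V : Type*) [NormedAddCommGroup V] [InnerProductSpace ℝ V]
    -- the orthogonal weight decomposition V = ⊕_ℓ V_ℓ, via its projections P ℓ
    (P : ℤ → (V →ₗ[ℝ] V))
    (hPsum : ∀ v : V, ∑ᶠ ℓ : ℤ, P ℓ v = v)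
    -- the boundary Weil operator C, a linear isometry with C(V_ℓ) = V_{-ℓ}
    (C : V →ₗ[ℝ] V)
    (hCiso : ∀ v : V, ‖C v‖ = ‖v‖)
    -- the flux lattice Λ and the integrality gap λ
    (Λ : AddSubgroup V)
    (lam : ℝ) (hlam : 0 < lam)
    (hgap : ∀ v ∈ Λ, ∀ ℓ : ℤ, P ℓ v = 0 ∨ lam ≤ ‖P ℓ v‖)
    -- the hypotheses of the statement
    (L y : ℝ) (hy : 1 ≤ y) (hcrit : L < lam ^ 2 * y)
    (v : V) (hv : v ∈ Λ)
    (hsd : ∀ ℓ : ℤ, y ^ ℓ • P ℓ v = C (P (-ℓ) v))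
    (htad : ∑ᶠ ℓ : ℤ, y ^ ℓ * ‖P ℓ v‖ ^ 2 ≤ L) :
    (∀ ℓ : ℤ, ℓ ≠ 0 → P ℓ v = 0) ∧ C v = v := by
  have hsd : IsSelfDual P C y v := hsd
  have hCinj : Function.Injective C := ((AddMonoidHomClass.isometry_iff_norm C).2 hCiso).injective
  have hpos : ∀ ℓ : ℤ, 1 ≤ ℓ → P ℓ v = 0 := fun ℓ hℓ =>
    eq_zero_of_zpow_mul_norm_sq_lt (hgap v hv ℓ) hlam hy hℓ <|
      ((zpow_mul_norm_sq_le_tadpole (by linarith) (finite_support_apply_of_finsum_eq_self hPsum v)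
        ℓ).trans htad).trans_lt hcrit
  have hnonzero : ∀ ℓ : ℤ, ℓ ≠ 0 → P ℓ v = 0 := by
    intro ℓ hℓ
    rcases hℓ.lt_or_gt with hneg | hposℓ
    · exact hsd.apply_eq_zero_of_apply_neg_eq_zero hCinj (hpos (-ℓ) (by omega))
    · exact hpos ℓ hposℓ
  refine ⟨hnonzero, ?_⟩
  rw [eq_apply_of_finsum_eq_self hPsum hnonzero]
  exact hsd.map_apply_zero

/-- One-variable Sl(2)-orbit setting: beyond the critical value of the saxion `y`
determined by the tadpole bound (`λ² y > L`), a flux `v` in the lattice `Λ` that is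
self-dual at `y` and satisfies the tadpole bound `L` at `y` has `P_ℓ v = 0` for all
`ℓ ≠ 0` and is invariant under the boundary Weil operator: `C v = v`. -/
theorem selfdual_weight_zero_beyond_critical
    (V : Type*) [NormedAddCommGroup V] [InnerProductSpace ℝ V] [FiniteDimensional ℝ V]
    -- the orthogonal weight decomposition V = ⊕_ℓ V_ℓ, via its projections P ℓ
    (P : ℤ → (V →ₗ[ℝ] V))
    (hPfin : (Function.support P).Finite)
    (hPsum : ∀ v : V, ∑ᶠ ℓ : ℤ, P ℓ v = v)
    (hPproj : ∀ (ℓ : ℤ) (v : V), P ℓ (P ℓ v) = P ℓ v)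
    (hPorth : ∀ ℓ ℓ' : ℤ, ℓ ≠ ℓ' → ∀ u w : V, (inner ℝ (P ℓ u) (P ℓ' w) : ℝ) = 0)
    -- the boundary Weil operator C, a linear isometry with C(V_ℓ) = V_{-ℓ}
    (C : V →ₗ[ℝ] V)
    (hCiso : ∀ v : V, ‖C v‖ = ‖v‖)
    (hCw : ∀ ℓ : ℤ, Submodule.map C (LinearMap.range (P ℓ)) = LinearMap.range (P (-ℓ)))
    -- the flux lattice Λ and the integrality gap λ
    (Λ : AddSubgroup V)
    (lam : ℝ) (hlam : 0 < lam)
    (hgap : ∀ v ∈ Λ, ∀ ℓ : ℤ, P ℓ v = 0 ∨ lam ≤ ‖P ℓ v‖)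
    -- the hypotheses of the statement
    (L y : ℝ) (hy : 1 ≤ y) (hcrit : L < lam ^ 2 * y)
    (v : V) (hv : v ∈ Λ)
    (hsd : ∀ ℓ : ℤ, y ^ ℓ • P ℓ v = C (P (-ℓ) v))
    (htad : ∑ᶠ ℓ : ℤ, y ^ ℓ * ‖P ℓ v‖ ^ 2 ≤ L) :
    (∀ ℓ : ℤ, ℓ ≠ 0 → P ℓ v = 0) ∧ C v = v :=
  selfdual_weight_zero_beyond_critical_general V P hPsum C hCiso Λ lam hlam hgap L y hy hcrit v hv
    hsd htad
end

section
/- In the multi-variable Sl(2)-orbit setting: let L ∈ ℝ, let r ∈ ℝ^m satisfy r_i ≥ 1 for all i, and let v ∈ Λ satisfy the tadpole bound L at r. If ℓ ∈ ℤ^m is a weight with w_ℓ(r) > L/λ², then P_ℓ v = 0; if moreover v is self-dual at r, then also P_{−ℓ} v = 0. (The 'heavy region' vanishing of flux components, Step 2 of the proof of Theorem 4, in the Sl(2)-orbit approximation.) -/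
/-!
All weights `∏ i, r i ^ ℓ i` are positive, so each term of the tadpole sum is bounded by the
whole sum. A nonzero lattice component `P ℓ v` has norm at least `λ` and would therefore cost at
least `w_ℓ λ² > L`. Self-duality at `-ℓ` then reads `w_{-ℓ} • P (-ℓ) v = C (P ℓ v) = 0`.
-/

open Function

lemma prod_zpow_pos {ι : Type*} [Fintype ι] {r : ι → ℝ} (hr : ∀ i, 0 < r i) (ℓ : ι → ℤ) :
    0 < ∏ i, r i ^ ℓ i :=
  Finset.prod_pos fun i _ => zpow_pos (hr i) _

lemma mul_norm_sq_le_finsum {ι E : Type*} [SeminormedAddGroup E] {x : ι → E}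
    (hx : (support x).Finite) {w : ι → ℝ} (hw : ∀ i, 0 ≤ w i) (i : ι) :
    w i * ‖x i‖ ^ 2 ≤ ∑ᶠ j, w j * ‖x j‖ ^ 2 :=
  single_le_finsum (f := fun j => w j * ‖x j‖ ^ 2) i
    (hx.subset fun j hj hxj => hj (by simp [hxj])) fun j => mul_nonneg (hw j) (sq_nonneg _)

lemma eq_zero_of_mul_norm_sq_le {E : Type*} [Zero E] [Norm E] {x : E} {lam w L : ℝ}
    (hlam : 0 < lam) (hgap : x = 0 ∨ lam ≤ ‖x‖) (hw : 0 ≤ w) (hbound : w * ‖x‖ ^ 2 ≤ L)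
    (hheavy : L / lam ^ 2 < w) : x = 0 := by
  refine hgap.resolve_right fun hx => hheavy.not_ge ?_
  rw [le_div_iff₀ (by positivity)]
  calc w * lam ^ 2 ≤ w * ‖x‖ ^ 2 := by gcongr
    _ ≤ L := hbound

theorem heavy_region_vanishing_general
    (V : Type*) [NormedAddCommGroup V] [InnerProductSpace ℝ V]
    (m : ℕ)
    -- the orthogonal weight decomposition V = ⊕_{ℓ ∈ ℤ^m} V_ℓ, via its projections P ℓ
    (P : (Fin m → ℤ) → (V →ₗ[ℝ] V))
    (hPfin : (Function.support P).Finite)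
    -- the boundary Weil operator C, a linear isometry with C(V_ℓ) = V_{-ℓ}
    (C : V →ₗ[ℝ] V)
    -- the flux lattice Λ and the integrality gap λ
    (Λ : AddSubgroup V)
    (lam : ℝ) (hlam : 0 < lam)
    (hgap : ∀ v ∈ Λ, ∀ ℓ : Fin m → ℤ, P ℓ v = 0 ∨ lam ≤ ‖P ℓ v‖)
    -- the hypotheses of the statement
    (L : ℝ) (r : Fin m → ℝ) (hr : ∀ i, 1 ≤ r i)
    (v : V) (hv : v ∈ Λ)
    (htad : ∑ᶠ ℓ : Fin m → ℤ, (∏ i, r i ^ ℓ i) * ‖P ℓ v‖ ^ 2 ≤ L)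
    (ℓ : Fin m → ℤ) (hheavy : L / lam ^ 2 < ∏ i, r i ^ ℓ i) :
    P ℓ v = 0 ∧
      ((∀ ℓ' : Fin m → ℤ, (∏ i, r i ^ ℓ' i) • P ℓ' v = C (P (-ℓ') v)) →
        P (-ℓ) v = 0) := by
  have hw : ∀ ℓ' : Fin m → ℤ, 0 < ∏ i, r i ^ ℓ' i :=
    prod_zpow_pos fun i => one_pos.trans_le (hr i)
  have hfin : (support fun ℓ' => P ℓ' v).Finite :=
    hPfin.subset fun ℓ' h hP => h (by simp [hP])
  have hPℓ : P ℓ v = 0 :=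
    eq_zero_of_mul_norm_sq_le hlam (hgap v hv ℓ) (hw ℓ).le
      ((mul_norm_sq_le_finsum hfin (fun ℓ' => (hw ℓ').le) ℓ).trans htad) hheavy
  refine ⟨hPℓ, fun hselfdual => ?_⟩
  have h := hselfdual (-ℓ)
  rw [neg_neg, hPℓ, map_zero] at h
  exact (smul_eq_zero.mp h).resolve_left (hw (-ℓ)).ne'

/-- Multi-variable Sl(2)-orbit setting, 'heavy region' vanishing: if `v ∈ Λ` satisfies
the tadpole bound `L` at growth-sector coordinates `r` (all `r i ≥ 1`) and the weight
`ℓ` satisfies `w_ℓ(r) = ∏ i, r i ^ ℓ i > L / λ²`, then `P_ℓ v = 0`; if moreover `v` is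
self-dual at `r`, then also `P_{-ℓ} v = 0`. -/
theorem heavy_region_vanishing
    (V : Type*) [NormedAddCommGroup V] [InnerProductSpace ℝ V] [FiniteDimensional ℝ V]
    (m : ℕ)
    -- the orthogonal weight decomposition V = ⊕_{ℓ ∈ ℤ^m} V_ℓ, via its projections P ℓ
    (P : (Fin m → ℤ) → (V →ₗ[ℝ] V))
    (hPfin : (Function.support P).Finite)
    (hPsum : ∀ v : V, ∑ᶠ ℓ : Fin m → ℤ, P ℓ v = v)
    (hPproj : ∀ (ℓ : Fin m → ℤ) (v : V), P ℓ (P ℓ v) = P ℓ v)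
    (hPorth : ∀ ℓ ℓ' : Fin m → ℤ, ℓ ≠ ℓ' → ∀ u w : V, (inner ℝ (P ℓ u) (P ℓ' w) : ℝ) = 0)
    -- the boundary Weil operator C, a linear isometry with C(V_ℓ) = V_{-ℓ}
    (C : V →ₗ[ℝ] V)
    (hCiso : ∀ v : V, ‖C v‖ = ‖v‖)
    (hCw : ∀ ℓ : Fin m → ℤ,
      Submodule.map C (LinearMap.range (P ℓ)) = LinearMap.range (P (-ℓ)))
    -- the flux lattice Λ and the integrality gap λ
    (Λ : AddSubgroup V)
    (lam : ℝ) (hlam : 0 < lam)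
    (hgap : ∀ v ∈ Λ, ∀ ℓ : Fin m → ℤ, P ℓ v = 0 ∨ lam ≤ ‖P ℓ v‖)
    -- the hypotheses of the statement
    (L : ℝ) (r : Fin m → ℝ) (hr : ∀ i, 1 ≤ r i)
    (v : V) (hv : v ∈ Λ)
    (htad : ∑ᶠ ℓ : Fin m → ℤ, (∏ i, r i ^ ℓ i) * ‖P ℓ v‖ ^ 2 ≤ L)
    (ℓ : Fin m → ℤ) (hheavy : L / lam ^ 2 < ∏ i, r i ^ ℓ i) :
    P ℓ v = 0 ∧
      ((∀ ℓ' : Fin m → ℤ, (∏ i, r i ^ ℓ' i) • P ℓ' v = C (P (-ℓ') v)) →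
        P (-ℓ) v = 0) :=
  heavy_region_vanishing_general V m P hPfin C Λ lam hlam hgap L r hr v hv htad ℓ hheavy
end

section
/- In the multi-variable Sl(2)-orbit setting: let L ∈ ℝ and let r ∈ ℝ^m satisfy r_i ≥ 1 for all i. If v ∈ Λ is self-dual at r and satisfies the tadpole bound L at r, then ‖P_ℓ v‖² ≤ L²/λ² for every weight ℓ ∈ ℤ^m. (The uniform bound on all sl(2)-weight components of a self-dual flux, combining Steps 2 and 3a of the proof of Theorem 4 in the Sl(2)-orbit approximation.) -/
/-!
The tadpole sum bounds each of its terms, and self-duality at the weight `ℓ` says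
`w_ℓ ‖P_ℓ v‖ = ‖P_{-ℓ} v‖` because `C` is an isometry. Hence the `ℓ`-th term equals
`w_ℓ ‖P_ℓ v‖² = ‖P_ℓ v‖ ‖P_{-ℓ} v‖ ≤ L`. If `P_ℓ v ≠ 0` then also `P_{-ℓ} v ≠ 0`, so the integrality
gap gives `‖P_{-ℓ} v‖ ≥ λ` and therefore `‖P_ℓ v‖ ≤ L / λ`.
-/

theorem le_of_finsum_le {α : Type*} {f : α → ℝ} (hf : (Function.support f).Finite)
    (hf0 : ∀ a, 0 ≤ f a) {L : ℝ} (hL : ∑ᶠ a, f a ≤ L) (a : α) : f a ≤ L :=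
  (single_le_finsum a hf hf0).trans hL

theorem sq_le_div_sq_of_mul_le {a b lam L : ℝ} (ha : 0 ≤ a) (hlam : 0 < lam) (hb : lam ≤ b)
    (h : a * b ≤ L) : a ^ 2 ≤ L ^ 2 / lam ^ 2 := by
  rw [← div_pow]
  have hle : a ≤ L / lam := by
    rw [le_div_iff₀ hlam]
    exact (mul_le_mul_of_nonneg_left hb ha).trans h
  exact pow_le_pow_left₀ ha hle 2

section

variable {ι E : Type*} [SeminormedAddCommGroup E] [NormedSpace ℝ E]

theorem finite_support_mul_norm_sq {P : ι → E →ₗ[ℝ] E} (hP : (Function.support P).Finite)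
    (c : ι → ℝ) (v : E) : (Function.support fun i => c i * ‖P i v‖ ^ 2).Finite := by
  refine hP.subset fun i hi => ?_
  contrapose! hi
  simp [Function.notMem_support.mp hi]

theorem norm_sq_le_of_norm_smul_eq {x y : E} {w lam L : ℝ} (hw : 0 < w) (hxy : ‖w • x‖ = ‖y‖)
    (hL : w * ‖x‖ ^ 2 ≤ L) (hlam : 0 < lam) (hgap : y = 0 ∨ lam ≤ ‖y‖) :
    ‖x‖ ^ 2 ≤ L ^ 2 / lam ^ 2 := by
  rw [norm_smul, Real.norm_of_nonneg hw.le] at hxy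
  rcases hgap with rfl | hy
  · have hx : ‖x‖ = 0 := by simpa [hw.ne'] using hxy
    rw [hx, zero_pow two_ne_zero]
    positivity
  · refine sq_le_div_sq_of_mul_le (norm_nonneg x) hlam hy ?_
    calc ‖x‖ * ‖y‖ = w * ‖x‖ ^ 2 := by rw [← hxy]; ring
      _ ≤ L := hL

end

theorem selfdual_weight_components_uniformly_bounded_general
    (V : Type*) [NormedAddCommGroup V] [InnerProductSpace ℝ V]
    (m : ℕ)
    -- the orthogonal weight decomposition V = ⊕_{ℓ ∈ ℤ^m} V_ℓ, via its projections P ℓ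
    (P : (Fin m → ℤ) → (V →ₗ[ℝ] V))
    (hPfin : (Function.support P).Finite)
    -- the boundary Weil operator C, a linear isometry with C(V_ℓ) = V_{-ℓ}
    (C : V →ₗ[ℝ] V)
    (hCiso : ∀ v : V, ‖C v‖ = ‖v‖)
    -- the flux lattice Λ and the integrality gap λ
    (Λ : AddSubgroup V)
    (lam : ℝ) (hlam : 0 < lam)
    (hgap : ∀ v ∈ Λ, ∀ ℓ : Fin m → ℤ, P ℓ v = 0 ∨ lam ≤ ‖P ℓ v‖)
    -- the hypotheses of the statement
    (L : ℝ) (r : Fin m → ℝ) (hr : ∀ i, 1 ≤ r i)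
    (v : V) (hv : v ∈ Λ)
    (hsd : ∀ ℓ : Fin m → ℤ, (∏ i, r i ^ ℓ i) • P ℓ v = C (P (-ℓ) v))
    (htad : ∑ᶠ ℓ : Fin m → ℤ, (∏ i, r i ^ ℓ i) * ‖P ℓ v‖ ^ 2 ≤ L) :
    ∀ ℓ : Fin m → ℤ, ‖P ℓ v‖ ^ 2 ≤ L ^ 2 / lam ^ 2 := by
  intro ℓ
  have hw : ∀ ℓ : Fin m → ℤ, 0 < ∏ i, r i ^ ℓ i := fun ℓ =>
    Finset.prod_pos fun i _ => zpow_pos (one_pos.trans_le (hr i)) _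
  have hterm : (∏ i, r i ^ ℓ i) * ‖P ℓ v‖ ^ 2 ≤ L :=
    le_of_finsum_le (finite_support_mul_norm_sq hPfin _ v)
      (fun ℓ => mul_nonneg (hw ℓ).le (sq_nonneg _)) htad ℓ
  exact norm_sq_le_of_norm_smul_eq (hw ℓ) (by rw [hsd ℓ, hCiso]) hterm hlam (hgap v hv (-ℓ))

/-- Multi-variable Sl(2)-orbit setting: a flux `v ∈ Λ` that is self-dual at
growth-sector coordinates `r` (all `r i ≥ 1`) and satisfies the tadpole bound `L` at `r`
has all of its sl(2)-weight components uniformly bounded: `‖P_ℓ v‖² ≤ L² / λ²`. -/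
theorem selfdual_weight_components_uniformly_bounded
    (V : Type*) [NormedAddCommGroup V] [InnerProductSpace ℝ V] [FiniteDimensional ℝ V]
    (m : ℕ)
    -- the orthogonal weight decomposition V = ⊕_{ℓ ∈ ℤ^m} V_ℓ, via its projections P ℓ
    (P : (Fin m → ℤ) → (V →ₗ[ℝ] V))
    (hPfin : (Function.support P).Finite)
    (hPsum : ∀ v : V, ∑ᶠ ℓ : Fin m → ℤ, P ℓ v = v)
    (hPproj : ∀ (ℓ : Fin m → ℤ) (v : V), P ℓ (P ℓ v) = P ℓ v)
    (hPorth : ∀ ℓ ℓ' : Fin m → ℤ, ℓ ≠ ℓ' → ∀ u w : V, (inner ℝ (P ℓ u) (P ℓ' w) : ℝ) = 0)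
    -- the boundary Weil operator C, a linear isometry with C(V_ℓ) = V_{-ℓ}
    (C : V →ₗ[ℝ] V)
    (hCiso : ∀ v : V, ‖C v‖ = ‖v‖)
    (hCw : ∀ ℓ : Fin m → ℤ,
      Submodule.map C (LinearMap.range (P ℓ)) = LinearMap.range (P (-ℓ)))
    -- the flux lattice Λ and the integrality gap λ
    (Λ : AddSubgroup V)
    (lam : ℝ) (hlam : 0 < lam)
    (hgap : ∀ v ∈ Λ, ∀ ℓ : Fin m → ℤ, P ℓ v = 0 ∨ lam ≤ ‖P ℓ v‖)
    -- the hypotheses of the statement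
    (L : ℝ) (r : Fin m → ℝ) (hr : ∀ i, 1 ≤ r i)
    (v : V) (hv : v ∈ Λ)
    (hsd : ∀ ℓ : Fin m → ℤ, (∏ i, r i ^ ℓ i) • P ℓ v = C (P (-ℓ) v))
    (htad : ∑ᶠ ℓ : Fin m → ℤ, (∏ i, r i ^ ℓ i) * ‖P ℓ v‖ ^ 2 ≤ L) :
    ∀ ℓ : Fin m → ℤ, ‖P ℓ v‖ ^ 2 ≤ L ^ 2 / lam ^ 2 :=
  selfdual_weight_components_uniformly_bounded_general V m P hPfin C hCiso Λ lam hlam hgap L r hr v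
    hv hsd htad
end

section
/- In the multi-variable Sl(2)-orbit setting, assume additionally that Λ is discrete (for every R > 0 the set {v ∈ Λ : ‖v‖ ≤ R} is finite). Then for every L ∈ ℝ, the set {v ∈ Λ : ∃ r ∈ ℝ^m with r_i ≥ 1 for all i, such that v is self-dual at r and satisfies the tadpole bound L at r} is finite. (Theorem 4 of the paper — finiteness of self-dual flux vacua — in the multi-variable Sl(2)-orbit approximation at zero axions.) -/
/-!
Self-duality and the isometry `C` give `w_ℓ ‖P_ℓ v‖ = ‖P_{-ℓ} v‖`, which by the integrality gap is
either `0` or at least `λ`. Hence every tadpole term `w_ℓ ‖P_ℓ v‖²` dominates `λ ‖P_ℓ v‖`, so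
`λ ‖v‖ ≤ λ Σ_ℓ ‖P_ℓ v‖ ≤ L`, and `v` lies in a ball that contains only finitely many lattice points.
-/

open Function

theorem norm_finsum_le {ι E : Type*} [SeminormedAddCommGroup E] (f : ι → E) :
    ‖∑ᶠ i, f i‖ ≤ ∑ᶠ i, ‖f i‖ := by
  by_cases hf : HasFiniteSupport f
  · rw [finsum_eq_sum f hf, finsum_eq_sum_of_support_subset (s := hf.toFinset) _
      fun i hi => hf.mem_toFinset.mpr fun h => hi (by simp [h])]
    exact norm_sum_le _ _
  · rw [finsum_of_not_hasFiniteSupport hf, norm_zero]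
    exact finsum_nonneg fun i => norm_nonneg _

theorem mul_norm_le_mul_norm_sq_of_smul_eq_isometry {V : Type*} [SeminormedAddCommGroup V]
    [NormedSpace ℝ V] {C : V → V} (hC : ∀ v, ‖C v‖ = ‖v‖) {lam w : ℝ} (hw : 0 < w) {x y : V}
    (hy : y = 0 ∨ lam ≤ ‖y‖) (h : w • x = C y) : lam * ‖x‖ ≤ w * ‖x‖ ^ 2 := by
  have hnorm : w * ‖x‖ = ‖y‖ := by
    simpa [norm_smul, abs_of_pos hw, hC] using congrArg norm h
  rcases hy with rfl | hy
  · have hx : ‖x‖ = 0 := by simpa [hw.ne'] using hnorm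
    simp [hx]
  · calc lam * ‖x‖ ≤ ‖y‖ * ‖x‖ := mul_le_mul_of_nonneg_right hy (norm_nonneg x)
      _ = w * ‖x‖ ^ 2 := by rw [← hnorm]; ring

theorem finiteness_selfdual_multi_variable_sl2_general
    (V : Type*) [NormedAddCommGroup V] [InnerProductSpace ℝ V]
    (m : ℕ)
    -- the orthogonal weight decomposition V = ⊕_{ℓ ∈ ℤ^m} V_ℓ, via its projections P ℓ
    (P : (Fin m → ℤ) → (V →ₗ[ℝ] V))
    (hPfin : (Function.support P).Finite)
    (hPsum : ∀ v : V, ∑ᶠ ℓ : Fin m → ℤ, P ℓ v = v)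
    -- the boundary Weil operator C, a linear isometry with C(V_ℓ) = V_{-ℓ}
    (C : V →ₗ[ℝ] V)
    (hCiso : ∀ v : V, ‖C v‖ = ‖v‖)
    -- the flux lattice Λ and the integrality gap λ
    (Λ : AddSubgroup V)
    (lam : ℝ) (hlam : 0 < lam)
    (hgap : ∀ v ∈ Λ, ∀ ℓ : Fin m → ℤ, P ℓ v = 0 ∨ lam ≤ ‖P ℓ v‖)
    -- discreteness of the lattice
    (hdiscrete : ∀ R : ℝ, 0 < R → {v : V | v ∈ Λ ∧ ‖v‖ ≤ R}.Finite)
    (L : ℝ) :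
    {v : V | v ∈ Λ ∧ ∃ r : Fin m → ℝ, (∀ i, 1 ≤ r i) ∧
      (∀ ℓ : Fin m → ℤ, (∏ i, r i ^ ℓ i) • P ℓ v = C (P (-ℓ) v)) ∧
      (∑ᶠ ℓ : Fin m → ℤ, (∏ i, r i ^ ℓ i) * ‖P ℓ v‖ ^ 2 ≤ L)}.Finite := by
  refine (hdiscrete (max (L / lam) 1) (by positivity)).subset ?_
  rintro v ⟨hvΛ, r, hr, hselfdual, htadpole⟩
  refine ⟨hvΛ, le_max_of_le_left ((le_div_iff₀' hlam).mpr ?_)⟩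
  have hfin : HasFiniteSupport (P · v) := hPfin.subset fun ℓ hℓ hP => hℓ (by simp [hP])
  have hw (ℓ : Fin m → ℤ) : 0 < ∏ i, r i ^ ℓ i :=
    Finset.prod_pos fun i _ => zpow_pos (one_pos.trans_le (hr i)) _
  have hterm (ℓ : Fin m → ℤ) : lam * ‖P ℓ v‖ ≤ (∏ i, r i ^ ℓ i) * ‖P ℓ v‖ ^ 2 :=
    mul_norm_le_mul_norm_sq_of_smul_eq_isometry hCiso (hw ℓ) (hgap v hvΛ (-ℓ)) (hselfdual ℓ)
  calc lam * ‖v‖ = lam * ‖∑ᶠ ℓ, P ℓ v‖ := by rw [hPsum]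
    _ ≤ ∑ᶠ ℓ, lam * ‖P ℓ v‖ := by
      rw [← mul_finsum]
      exact mul_le_mul_of_nonneg_left (norm_finsum_le _) hlam.le
    _ ≤ ∑ᶠ ℓ, (∏ i, r i ^ ℓ i) * ‖P ℓ v‖ ^ 2 :=
      finsum_le_finsum' (hfin.subset fun ℓ hℓ hP => hℓ (by simp [hP]))
        (hfin.subset fun ℓ hℓ hP => hℓ (by simp [hP])) hterm
    _ ≤ L := htadpole

/-- Theorem 4 of the paper in the multi-variable Sl(2)-orbit approximation at zero
axions: if the flux lattice `Λ` is discrete, then for every tadpole bound `L` only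
finitely many fluxes `v ∈ Λ` are self-dual and satisfy the tadpole bound at some
growth-sector coordinates `r` with all `r i ≥ 1`. -/
theorem finiteness_selfdual_multi_variable_sl2
    (V : Type*) [NormedAddCommGroup V] [InnerProductSpace ℝ V] [FiniteDimensional ℝ V]
    (m : ℕ)
    -- the orthogonal weight decomposition V = ⊕_{ℓ ∈ ℤ^m} V_ℓ, via its projections P ℓ
    (P : (Fin m → ℤ) → (V →ₗ[ℝ] V))
    (hPfin : (Function.support P).Finite)
    (hPsum : ∀ v : V, ∑ᶠ ℓ : Fin m → ℤ, P ℓ v = v)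
    (hPproj : ∀ (ℓ : Fin m → ℤ) (v : V), P ℓ (P ℓ v) = P ℓ v)
    (hPorth : ∀ ℓ ℓ' : Fin m → ℤ, ℓ ≠ ℓ' → ∀ u w : V, (inner ℝ (P ℓ u) (P ℓ' w) : ℝ) = 0)
    -- the boundary Weil operator C, a linear isometry with C(V_ℓ) = V_{-ℓ}
    (C : V →ₗ[ℝ] V)
    (hCiso : ∀ v : V, ‖C v‖ = ‖v‖)
    (hCw : ∀ ℓ : Fin m → ℤ,
      Submodule.map C (LinearMap.range (P ℓ)) = LinearMap.range (P (-ℓ)))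
    -- the flux lattice Λ and the integrality gap λ
    (Λ : AddSubgroup V)
    (lam : ℝ) (hlam : 0 < lam)
    (hgap : ∀ v ∈ Λ, ∀ ℓ : Fin m → ℤ, P ℓ v = 0 ∨ lam ≤ ‖P ℓ v‖)
    -- discreteness of the lattice
    (hdiscrete : ∀ R : ℝ, 0 < R → {v : V | v ∈ Λ ∧ ‖v‖ ≤ R}.Finite)
    (L : ℝ) :
    {v : V | v ∈ Λ ∧ ∃ r : Fin m → ℝ, (∀ i, 1 ≤ r i) ∧
      (∀ ℓ : Fin m → ℤ, (∏ i, r i ^ ℓ i) • P ℓ v = C (P (-ℓ) v)) ∧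
      (∑ᶠ ℓ : Fin m → ℤ, (∏ i, r i ^ ℓ i) * ‖P ℓ v‖ ^ 2 ≤ L)}.Finite :=
  finiteness_selfdual_multi_variable_sl2_general V m P hPfin hPsum C hCiso Λ lam hlam hgap hdiscrete
    L
end

section
/- Let m ≥ 1, let r₁,…,r_m be real numbers with r_i ≥ 1 for all i, let k₁,…,k_m be integers with k_i ≥ 1, let s^i_j ∈ ℝ be given for 1 ≤ j ≤ i ≤ m with s^i_i ≤ k_i − 1 for every i, let ℓ₁,…,ℓ_m ∈ ℝ, and let B ∈ ℝ. Set S_j = Σ_{i=j}^m s^i_j. If ∏_{j=1}^m r_j^{−(ℓ_j + S_j)/2} ≤ B, then ∏_{i=1}^m ( r_i^{−k_i + S_i/2} · ∏_{j=1}^{i−1} r_j^{−s^i_j} ) ≤ B · (∏_{i=1}^m r_i^{ℓ_i/2}) · (∏_{i=1}^m r_i)^{−1}, where all powers are real powers. (The main technical estimate of Step 3b in the proof of Theorem 4: terms in the nilpotent orbit expansion of h⁻¹v̂ with all k_i ≥ 1 are suppressed by an extra factor (r₁⋯r_m)⁻¹ = y₁⁻¹ relative to the leading sl(2) scaling.)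 -/
open Finset

/-- The main technical estimate of Step 3b in the proof of Theorem 4: the terms of the
nilpotent orbit expansion with all expansion orders `k i ≥ 1` are suppressed by an extra
factor `(r₁ ⋯ r_m)⁻¹` relative to the leading sl(2) scaling `∏ r_i^{ℓ_i / 2}`.
Here `r i ≥ 1` are growth-sector ratios, `s i j` (for `j ≤ i`) are the sl(2)-weights of
the expansion coefficients, subject to `s i i ≤ k i - 1`, and `S j = Σ_{i ≥ j} s i j`.
All powers are real (rpow) powers. -/
theorem nilpotent_orbit_expansion_estimate
    (m : ℕ) (hm : 1 ≤ m)
    (r : Fin m → ℝ) (hr : ∀ i, 1 ≤ r i)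
    (k : Fin m → ℤ) (hk : ∀ i, 1 ≤ k i)
    (s : Fin m → Fin m → ℝ)
    (hs : ∀ i, s i i ≤ (k i : ℝ) - 1)
    (ℓ : Fin m → ℝ) (B : ℝ)
    (S : Fin m → ℝ)
    (hS : ∀ j, S j = ∑ i ∈ univ.filter (fun i => j ≤ i), s i j)
    (hB : (∏ j, r j ^ (-(ℓ j + S j) / 2)) ≤ B) :
    (∏ i, (r i ^ (-(k i : ℝ) + S i / 2) *
        ∏ j ∈ univ.filter (fun j => j < i), r j ^ (-(s i j))))
      ≤ B * (∏ i, r i ^ (ℓ i / 2)) * (∏ i, r i)⁻¹ := by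
  have hr0 : ∀ i, (0:ℝ) < r i := fun i => lt_of_lt_of_le one_pos (hr i)
  -- Step 1: rewrite the LHS as a single product over j
  have hswap :
      (∏ i, ∏ j ∈ univ.filter (fun j => j < i), r j ^ (-(s i j)))
        = ∏ j, ∏ i ∈ univ.filter (fun i => j < i), r j ^ (-(s i j)) := by
    apply Finset.prod_comm'
    intro i j
    simp [and_comm]
  have hLHS :
      (∏ i, (r i ^ (-(k i : ℝ) + S i / 2) *
          ∏ j ∈ univ.filter (fun j => j < i), r j ^ (-(s i j))))
        = ∏ j, r j ^ (-(k j : ℝ) + S j / 2 - (S j - s j j)) := by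
    rw [Finset.prod_mul_distrib, hswap, ← Finset.prod_mul_distrib]
    refine Finset.prod_congr rfl fun j _ => ?_
    have h1 : (∏ i ∈ univ.filter (fun i => j < i), r j ^ (-(s i j)))
        = r j ^ (-(S j - s j j)) := by
      rw [← Real.rpow_sum_of_pos (hr0 j)]
      congr 1
      rw [Finset.sum_neg_distrib]
      have : S j = s j j + ∑ i ∈ univ.filter (fun i => j < i), s i j := by
        rw [hS j]
        have : univ.filter (fun i => j ≤ i) =
            insert j (univ.filter (fun i : Fin m => j < i)) := by
          ext i
          simp [le_iff_lt_or_eq, eq_comm, or_comm]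
        rw [this, Finset.sum_insert (by simp)]
      rw [this]; ring
    rw [h1, ← Real.rpow_add (hr0 j)]
    ring_nf
  rw [hLHS]
  -- Step 2: bound each exponent
  have step2 : (∏ j, r j ^ (-(k j : ℝ) + S j / 2 - (S j - s j j)))
      ≤ ∏ j, r j ^ (-(ℓ j + S j) / 2 + ℓ j / 2 + (-1 : ℝ)) := by
    refine Finset.prod_le_prod (fun j _ => (Real.rpow_pos_of_pos (hr0 j) _).le) ?_
    intro j _
    apply Real.rpow_le_rpow_of_exponent_le (hr j)
    have := hs j
    have hkj : (1:ℝ) ≤ (k j : ℝ) := by exact_mod_cast hk j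
    nlinarith
  refine step2.trans ?_
  have hexp : (∏ j, r j ^ (-(ℓ j + S j) / 2 + ℓ j / 2 + (-1 : ℝ)))
      = (∏ j, r j ^ (-(ℓ j + S j) / 2)) * (∏ j, r j ^ (ℓ j / 2)) * (∏ j, r j)⁻¹ := by
    rw [← Finset.prod_inv_distrib, ← Finset.prod_mul_distrib, ← Finset.prod_mul_distrib]
    refine Finset.prod_congr rfl fun j _ => ?_
    rw [Real.rpow_add (hr0 j), Real.rpow_add (hr0 j), Real.rpow_neg_one]
  rw [hexp]
  have hrp : (0:ℝ) < ∏ j, r j := Finset.prod_pos fun j _ => hr0 j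
  have hpos : (0:ℝ) ≤ (∏ j, r j ^ (ℓ j / 2)) * (∏ j, r j)⁻¹ :=
    mul_nonneg (Finset.prod_nonneg fun j _ => (Real.rpow_pos_of_pos (hr0 j) _).le)
      (inv_nonneg.2 hrp.le)
  calc (∏ j, r j ^ (-(ℓ j + S j) / 2)) * (∏ j, r j ^ (ℓ j / 2)) * (∏ j, r j)⁻¹
      = (∏ j, r j ^ (-(ℓ j + S j) / 2)) * ((∏ j, r j ^ (ℓ j / 2)) * (∏ j, r j)⁻¹) := by ring
    _ ≤ B * ((∏ j, r j ^ (ℓ j / 2)) * (∏ j, r j)⁻¹) := mul_le_mul_of_nonneg_right hB hpos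
    _ = B * (∏ j, r j ^ (ℓ j / 2)) * (∏ j, r j)⁻¹ := by ring
end

section
/- (ℝ-split form of Lemma C.1, i.e., CDK Lemma 4.4.) With the data of an ℝ-split bigrading (V, σ, I^{p,q}) and a ℂ-linear map N commuting with σ and satisfying N(I^{p,q}) ⊆ I^{p−1,q−1}, set W_{2k} = ⊕_{p+q ≤ 2k} I^{p,q}, F̃^k = ⊕_{p ≥ k} I^{p,q}, and F_∞^k = e^{iN}(F̃^k). If w ∈ F_∞^k ∩ W_{2k} satisfies σ(w) = w, then N w = 0 and w ∈ I^{k,k}; in particular w has sl(2)-weight p + q − 2k equal to zero. -/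
open Function

theorem finsum_decomp_zero {ι M : Type*} [DecidableEq ι] [AddCommGroup M] [Module ℂ M]
    {p : ι → Submodule ℂ M} (hp : iSupIndep p)
    (d : ι → M) (hd : ∀ i, d i ∈ p i) (hds : (Function.support d).Finite)
    (hsum : ∑ᶠ i, d i = 0) : ∀ i, d i = 0 := by
  classical
  set x : Π₀ i, p i := DFinsupp.mk hds.toFinset (fun i => ⟨d i.1, hd i.1⟩) with hx
  have hls : (DFinsupp.lsum ℕ (M := fun i ↦ ↥(p i)) fun i => (p i).subtype) x = ∑ᶠ i, d i := by
    rw [DFinsupp.lsum_apply_apply, DFinsupp.sumAddHom_apply, finsum_eq_sum d hds]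
    calc ∑ i ∈ x.support, ((p i).subtype) (x i)
        = ∑ i ∈ hds.toFinset, ((x i : M)) :=
          Finset.sum_subset DFinsupp.support_mk_subset (fun i _ h2 => by simpa using h2)
      _ = ∑ i ∈ hds.toFinset, d i :=
          Finset.sum_congr rfl fun i hi => by simp [hx, DFinsupp.mk_apply, hi]
  have hx0 : x = 0 := hp.dfinsupp_lsum_injective (by rw [hls, hsum, map_zero])
  intro i
  by_cases hi : i ∈ hds.toFinset
  · have := DFunLike.congr_fun hx0 i
    simpa [hx, DFinsupp.mk_apply, hi, Subtype.ext_iff] using this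
  · simpa using Set.Finite.mem_toFinset hds |>.not.mp hi

theorem exists_decomp_aux {ι M : Type*} [AddCommGroup M] [Module ℂ M]
    (p : ι → Submodule ℂ M) (P : ι → Prop) {v : M}
    (hv : v ∈ ⨆ (i : ι), ⨆ (_ : P i), p i) :
    ∃ f : ι → M, (∀ i, f i ∈ p i) ∧ (Function.support f).Finite ∧
      (∀ i, ¬ P i → f i = 0) ∧ ∑ᶠ i, f i = v := by
  classical
  obtain ⟨f, hf, hsum⟩ := (Submodule.mem_iSup_iff_exists_finsupp _ _).mp hv
  have hP : ∀ i, ¬ P i → f i = 0 := by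
    intro i hi
    have := hf i
    rw [iSup_neg hi] at this
    exact (Submodule.mem_bot ℂ).mp this
  refine ⟨f, ?_, f.finite_support, hP, ?_⟩
  · intro i
    by_cases h : P i
    · have := hf i; rwa [iSup_pos h] at this
    · rw [hP i h]; exact zero_mem _
  · rw [finsum_eq_sum_of_support_subset _ (s := f.support)
      (by intro i hi; simpa [Finsupp.mem_support_iff] using hi)]
    exact hsum

/-- ℝ-split form of CDK Lemma 4.4: given an ℝ-split bigrading `I^{p,q}` of `(V, σ)` and a
`ℂ`-linear `N` commuting with the conjugation `σ` and shifting the bigrading by `(-1,-1)`,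
let `W_{2k} = ⊕_{p+q ≤ 2k} I^{p,q}`, `F̃^k = ⊕_{p ≥ k} I^{p,q}` and `F_∞^k = e^{iN} F̃^k`.
Any real vector `w ∈ F_∞^k ∩ W_{2k}` satisfies `N w = 0` and `w ∈ I^{k,k}` (so it has
sl(2)-weight `p + q - 2k` equal to zero). -/
theorem real_class_in_Finfty_cap_W_is_central
    (V : Type*) [AddCommGroup V] [Module ℂ V]
    -- the conjugation: an antilinear involution of V
    (σ : V →ₛₗ[starRingEnd ℂ] V)
    (hσinv : ∀ v : V, σ (σ v) = v)
    -- the ℝ-split bigrading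
    (I : ℤ → ℤ → Submodule ℂ V)
    (hIfin : {pq : ℤ × ℤ | I pq.1 pq.2 ≠ ⊥}.Finite)
    (hIdecomp : DirectSum.IsInternal fun pq : ℤ × ℤ => I pq.1 pq.2)
    (hIconj : ∀ p q : ℤ, ∀ v ∈ I p q, σ v ∈ I q p)
    -- the nilpotent operator N
    (N : V →ₗ[ℂ] V)
    (hNσ : ∀ v : V, N (σ v) = σ (N v))
    (hNI : ∀ p q : ℤ, ∀ v ∈ I p q, N v ∈ I (p - 1) (q - 1))
    (k : ℤ)
    -- W_{2k}, F̃^k, and the hypothesis w ∈ F_∞^k ∩ W_{2k} with w real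
    (w : V)
    (hwF : ∃ u ∈ (⨆ (p : ℤ) (q : ℤ) (_ : k ≤ p), I p q),
        w = ∑ᶠ j : ℕ, ((Complex.I ^ j / (j.factorial : ℂ)) • (N ^ j) u))
    (hwW : w ∈ ⨆ (p : ℤ) (q : ℤ) (_ : p + q ≤ 2 * k), I p q)
    (hwreal : σ w = w) :
    N w = 0 ∧ w ∈ I k k := by
  classical
  obtain ⟨u, huF, hwsum⟩ := hwF
  set c : ℕ → ℂ := fun j => Complex.I ^ j / (j.factorial : ℂ) with hc_def
  -- iterated shift of the bigrading under N
  have hNpow : ∀ (j : ℕ) (p q : ℤ), ∀ x ∈ I p q, (N ^ j) x ∈ I (p - j) (q - j) := by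
    intro j
    induction j with
    | zero => intro p q x hx; simpa using hx
    | succ j ih =>
      intro p q x hx
      have h1 : (N ^ (j + 1)) x = (N ^ j) (N x) := by
        rw [pow_succ, Module.End.mul_apply]
      have h2 := ih (p - 1) (q - 1) (N x) (hNI p q x hx)
      have e1 : p - 1 - (j : ℤ) = p - ((j : ℕ) + 1 : ℕ) := by push_cast; ring
      have e2 : q - 1 - (j : ℤ) = q - ((j : ℕ) + 1 : ℕ) := by push_cast; ring
      rw [h1]
      rwa [e1, e2] at h2
  -- the global nilpotency exponent
  set T : Finset ℤ := insert k (hIfin.toFinset.image Prod.fst) with hT_def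
  have hTne : T.Nonempty := ⟨k, by simp [hT_def]⟩
  set n : ℕ := (T.max' hTne - T.min' hTne).toNat + 1 with hn_def
  have hn1 : 0 < n := by omega
  have hmemT : ∀ p q : ℤ, I p q ≠ ⊥ → p ∈ T := by
    intro p q h
    have : (p, q) ∈ hIfin.toFinset := hIfin.mem_toFinset.mpr h
    simp only [hT_def, Finset.mem_insert]
    exact Or.inr (Finset.mem_image.mpr ⟨(p, q), this, rfl⟩)
  have hIbot : ∀ p q : ℤ, p < T.min' hTne → I p q = ⊥ := by
    intro p q hp
    by_contra h
    exact absurd (T.min'_le p (hmemT p q h)) (by omega)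
  have hNbot : ∀ p q : ℤ, ∀ x ∈ I p q, (N ^ n) x = 0 := by
    intro p q x hx
    have hmem := hNpow n p q x hx
    by_cases h0 : I p q = ⊥
    · have : x = 0 := by simpa [h0] using hx
      simp [this]
    · have hp : p ∈ T := hmemT p q h0
      have hple : p ≤ T.max' hTne := T.le_max' p hp
      have hmin : T.min' hTne ≤ T.max' hTne := T.min'_le _ (T.max'_mem hTne)
      have : p - (n : ℤ) < T.min' hTne := by
        have : ((T.max' hTne - T.min' hTne).toNat : ℤ) = T.max' hTne - T.min' hTne := by omega
        omega
      have := hIbot (p - n) (q - n) this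
      simpa [this] using hmem
  have hNn : ∀ v : V, (N ^ n) v = 0 := by
    have htop : (⨆ pq : ℤ × ℤ, I pq.1 pq.2) ≤ LinearMap.ker (N ^ n) := by
      refine iSup_le fun pq => ?_
      intro x hx
      exact LinearMap.mem_ker.mpr (hNbot pq.1 pq.2 x hx)
    intro v
    have hv : v ∈ (⨆ pq : ℤ × ℤ, I pq.1 pq.2) := by
      rw [hIdecomp.submodule_iSup_eq_top]; trivial
    exact LinearMap.mem_ker.mp (htop hv)
  have hindep : iSupIndep (fun pq : ℤ × ℤ => I pq.1 pq.2) := hIdecomp.submodule_iSupIndep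
  -- uniqueness of finite decompositions
  have huniq : ∀ f f' : ℤ × ℤ → V, (∀ pq, f pq ∈ I pq.1 pq.2) → (∀ pq, f' pq ∈ I pq.1 pq.2) →
      (Function.support f).Finite → (Function.support f').Finite →
      (∑ᶠ pq, f pq) = (∑ᶠ pq, f' pq) → ∀ pq, f pq = f' pq := by
    intro f f' hf hf' hfs hfs' hsum pq
    have h0 := finsum_decomp_zero hindep (f - f')
      (fun i => sub_mem (hf i) (hf' i))
      ((hfs.union hfs').subset (Function.support_sub f f'))
      (by simp only [Pi.sub_apply]; rw [finsum_sub_distrib hfs hfs', hsum, sub_self]) pq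
    simpa [sub_eq_zero] using h0
  -- decomposition of u
  have huF' : u ∈ ⨆ (pq : ℤ × ℤ), ⨆ (_ : k ≤ pq.1), I pq.1 pq.2 := by
    have hle : (⨆ (p : ℤ) (q : ℤ) (_ : k ≤ p), I p q) ≤
        ⨆ (pq : ℤ × ℤ), ⨆ (_ : k ≤ pq.1), I pq.1 pq.2 := by
      refine iSup_le fun p => iSup_le fun q => iSup_le fun hp => ?_
      exact le_iSup_of_le (p, q) (le_iSup_of_le hp le_rfl)
    exact hle huF
  obtain ⟨g, hg_mem, hg_fin, hgP, hu_sum⟩ :=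
    exists_decomp_aux (fun pq : ℤ × ℤ => I pq.1 pq.2) (fun pq => k ≤ pq.1) huF'
  -- decomposition of w from the weight filtration
  have hwW' : w ∈ ⨆ (pq : ℤ × ℤ), ⨆ (_ : pq.1 + pq.2 ≤ 2 * k), I pq.1 pq.2 := by
    have hle : (⨆ (p : ℤ) (q : ℤ) (_ : p + q ≤ 2 * k), I p q) ≤
        ⨆ (pq : ℤ × ℤ), ⨆ (_ : pq.1 + pq.2 ≤ 2 * k), I pq.1 pq.2 := by
      refine iSup_le fun p => iSup_le fun q => iSup_le fun hp => ?_
      exact le_iSup_of_le (p, q) (le_iSup_of_le hp le_rfl)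
    exact hle hwW
  obtain ⟨gW, hgW_mem, hgW_fin, hgWP, hw_sum⟩ :=
    exists_decomp_aux (fun pq : ℤ × ℤ => I pq.1 pq.2) (fun pq => pq.1 + pq.2 ≤ 2 * k) hwW'
  -- the computed component decomposition of w
  set cw : ℤ × ℤ → V :=
    fun pq => ∑ j ∈ Finset.range n, c j • (N ^ j) (g (pq.1 + j, pq.2 + j)) with hcw_def
  have hcw_mem : ∀ pq : ℤ × ℤ, cw pq ∈ I pq.1 pq.2 := by
    intro pq
    refine Submodule.sum_mem _ fun j _ => Submodule.smul_mem _ _ ?_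
    have := hNpow j (pq.1 + j) (pq.2 + j) _ (hg_mem (pq.1 + j, pq.2 + j))
    simpa using this
  set G' : Finset (ℤ × ℤ) := hg_fin.toFinset with hG'_def
  set E : Finset (ℤ × ℤ) :=
    ((Finset.range n) ×ˢ G').image (fun x : ℕ × (ℤ × ℤ) => (x.2.1 - x.1, x.2.2 - x.1)) with hE_def
  have hE_mem : ∀ (j : ℕ) (ab : ℤ × ℤ), j < n → g ab ≠ 0 → (ab.1 - j, ab.2 - j) ∈ E := by
    intro j ab hj hab
    exact Finset.mem_image.mpr ⟨(j, ab),
      Finset.mem_product.mpr ⟨Finset.mem_range.mpr hj, hg_fin.mem_toFinset.mpr hab⟩, rfl⟩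
  have hcw_supp : Function.support cw ⊆ (E : Set (ℤ × ℤ)) := by
    intro pq hpq
    obtain ⟨j, hj, hne⟩ := Finset.exists_ne_zero_of_sum_ne_zero hpq
    have hgne : g (pq.1 + j, pq.2 + j) ≠ 0 := by
      intro h0; exact hne (by simp [h0])
    have := hE_mem j (pq.1 + j, pq.2 + j) (Finset.mem_range.mp hj) hgne
    simpa using this
  have hcw_fin : (Function.support cw).Finite := E.finite_toSet.subset hcw_supp
  have hcw_sum : ∑ᶠ pq : ℤ × ℤ, cw pq = w := by
    have hw1 : w = ∑ j ∈ Finset.range n, c j • (N ^ j) u := by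
      rw [hwsum]
      refine finsum_eq_sum_of_support_subset _ ?_
      intro j hj
      simp only [Finset.coe_range, Set.mem_Iio]
      by_contra h
      push_neg at h
      obtain ⟨m, rfl⟩ : ∃ m, j = m + n := ⟨j - n, by omega⟩
      refine hj ?_
      show c (m + n) • (N ^ (m + n)) u = 0
      rw [pow_add, Module.End.mul_apply, hNn u, map_zero, smul_zero]
    have h2 : ∀ j : ℕ, (N ^ j) u = ∑ᶠ pq : ℤ × ℤ, (N ^ j) (g pq) := by
      intro j
      rw [← hu_sum]
      exact ((N ^ j).toAddMonoidHom.map_finsum hg_fin)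
    have hbij : ∀ j : ℕ, Function.Bijective
        (fun pq : ℤ × ℤ => (pq.1 + (j : ℤ), pq.2 + (j : ℤ))) := by
      intro j
      constructor
      · intro a b h
        have h1 : a.1 + (j : ℤ) = b.1 + (j : ℤ) := congrArg Prod.fst h
        have h2 : a.2 + (j : ℤ) = b.2 + (j : ℤ) := congrArg Prod.snd h
        exact Prod.ext_iff.mpr ⟨by omega, by omega⟩
      · intro ab
        exact ⟨(ab.1 - (j : ℤ), ab.2 - (j : ℤ)), by simp⟩
    have step : ∀ j ∈ Finset.range n,
        ∑ pq ∈ E, c j • (N ^ j) (g (pq.1 + (j : ℤ), pq.2 + (j : ℤ))) = c j • (N ^ j) u := by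
      intro j hj
      have hjn : j < n := Finset.mem_range.mp hj
      have hsub : Function.support
          (fun pq : ℤ × ℤ => c j • (N ^ j) (g (pq.1 + (j : ℤ), pq.2 + (j : ℤ)))) ⊆ ↑E := by
        intro pq hpq
        have hgne : g (pq.1 + (j : ℤ), pq.2 + (j : ℤ)) ≠ 0 := fun h0 => hpq (by simp [h0])
        have := hE_mem j (pq.1 + (j : ℤ), pq.2 + (j : ℤ)) hjn hgne
        simpa using this
      have hsub2 : Function.support (fun ab : ℤ × ℤ => (N ^ j) (g ab)) ⊆
          Function.support g := by
        intro ab hab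
        intro h0
        exact hab (by simp [h0])
      calc ∑ pq ∈ E, c j • (N ^ j) (g (pq.1 + (j : ℤ), pq.2 + (j : ℤ)))
          = ∑ᶠ pq : ℤ × ℤ, c j • (N ^ j) (g (pq.1 + (j : ℤ), pq.2 + (j : ℤ))) :=
            (finsum_eq_sum_of_support_subset _ hsub).symm
        _ = ∑ᶠ ab : ℤ × ℤ, c j • (N ^ j) (g ab) :=
            finsum_comp (g := fun ab : ℤ × ℤ => c j • (N ^ j) (g ab)) _ (hbij j)
        _ = c j • ∑ᶠ ab : ℤ × ℤ, (N ^ j) (g ab) :=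
            (smul_finsum' (c j) (hg_fin.subset hsub2)).symm
        _ = c j • (N ^ j) u := by rw [← h2 j]
    calc ∑ᶠ pq : ℤ × ℤ, cw pq
        = ∑ pq ∈ E, cw pq := finsum_eq_sum_of_support_subset _ hcw_supp
      _ = ∑ pq ∈ E, ∑ j ∈ Finset.range n, c j • (N ^ j) (g (pq.1 + (j : ℤ), pq.2 + (j : ℤ))) :=
          Finset.sum_congr rfl fun pq _ => by simp only [hcw_def]
      _ = ∑ j ∈ Finset.range n, ∑ pq ∈ E, c j • (N ^ j) (g (pq.1 + (j : ℤ), pq.2 + (j : ℤ))) :=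
          Finset.sum_comm
      _ = ∑ j ∈ Finset.range n, c j • (N ^ j) u := Finset.sum_congr rfl step
      _ = w := hw1.symm
  -- the components of w vanish in weight > 2k
  have hW0 : ∀ pq : ℤ × ℤ, 2 * k < pq.1 + pq.2 → cw pq = 0 := by
    intro pq h
    have := huniq cw gW hcw_mem hgW_mem hcw_fin hgW_fin (by rw [hcw_sum, hw_sum]) pq
    rw [this]
    exact hgWP pq (by omega)
  -- reality of the components of w
  have hσc : ∀ pq : ℤ × ℤ, σ (cw (pq.2, pq.1)) = cw pq := by
    set cσ : ℤ × ℤ → V := fun pq => σ (cw (pq.2, pq.1)) with hcσ_def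
    have hmem : ∀ pq : ℤ × ℤ, cσ pq ∈ I pq.1 pq.2 :=
      fun pq => hIconj pq.2 pq.1 _ (hcw_mem (pq.2, pq.1))
    have hfin : (Function.support cσ).Finite := by
      refine (hcw_fin.preimage (Prod.swap_injective.injOn)).subset ?_
      intro pq hpq
      simp only [Set.mem_preimage, Function.mem_support]
      intro h0
      refine hpq ?_
      show σ (cw (pq.2, pq.1)) = 0
      rw [show cw (pq.2, pq.1) = 0 from h0, map_zero]
    have hsumσ : ∑ᶠ pq : ℤ × ℤ, cσ pq = ∑ᶠ pq : ℤ × ℤ, cw pq := by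
      have h1 : ∑ᶠ pq : ℤ × ℤ, σ (cw (Prod.swap pq)) = ∑ᶠ pq : ℤ × ℤ, σ (cw pq) :=
        finsum_comp (g := fun pq : ℤ × ℤ => σ (cw pq)) Prod.swap Prod.swap_bijective
      have h2 : ∑ᶠ pq : ℤ × ℤ, σ (cw pq) = σ (∑ᶠ pq : ℤ × ℤ, cw pq) :=
        (σ.toAddMonoidHom.map_finsum hcw_fin).symm
      calc ∑ᶠ pq : ℤ × ℤ, cσ pq
          = ∑ᶠ pq : ℤ × ℤ, σ (cw (Prod.swap pq)) := rfl
        _ = σ (∑ᶠ pq : ℤ × ℤ, cw pq) := by rw [h1, h2]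
        _ = σ w := by rw [hcw_sum]
        _ = w := hwreal
        _ = ∑ᶠ pq : ℤ × ℤ, cw pq := hcw_sum.symm
    exact huniq cσ cw hmem hcw_mem hfin hcw_fin hsumσ
  -- a single-term evaluation of cw
  have hcw_single : ∀ (pq : ℤ × ℤ) (j₀ : ℕ), j₀ ∈ Finset.range n →
      (∀ j ∈ Finset.range n, j ≠ j₀ → g (pq.1 + j, pq.2 + j) = 0) →
      cw pq = c j₀ • (N ^ j₀) (g (pq.1 + j₀, pq.2 + j₀)) := by
    intro pq j₀ hj₀ hz
    exact Finset.sum_eq_single_of_mem j₀ hj₀ (fun j hj hne => by rw [hz j hj hne]; simp)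
  -- support bound for g
  have hgk : ∀ pq : ℤ × ℤ, g pq ≠ 0 → k ≤ pq.1 := by
    intro pq h; by_contra hk; exact h (hgP pq hk)
  set SB : Finset ℤ := insert (2 * k) (G'.image fun pq => pq.1 + pq.2) with hSB_def
  have hSBne : SB.Nonempty := ⟨2 * k, by simp [hSB_def]⟩
  set B : ℤ := SB.max' hSBne with hB_def
  have hB : ∀ pq : ℤ × ℤ, g pq ≠ 0 → pq.1 + pq.2 ≤ B := by
    intro pq h
    refine SB.le_max' _ ?_
    simp only [hSB_def, Finset.mem_insert]
    exact Or.inr (Finset.mem_image.mpr ⟨pq, hg_fin.mem_toFinset.mpr h, rfl⟩)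
  -- Claim A: components of u in weight > 2k vanish
  have claimA : ∀ d : ℕ, ∀ pq : ℤ × ℤ, k ≤ pq.1 → 2 * k < pq.1 + pq.2 →
      B ≤ pq.1 + pq.2 + d → g pq = 0 := by
    intro d
    induction d using Nat.strong_induction_on with
    | _ d ih =>
      intro pq hk h2k hBd
      have hterm : ∀ j ∈ Finset.range n, j ≠ 0 → g (pq.1 + (j : ℤ), pq.2 + (j : ℤ)) = 0 := by
        intro j _ hj0
        by_contra hne
        have hsle : pq.1 + (j : ℤ) + (pq.2 + (j : ℤ)) ≤ B := hB _ hne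
        have h2j : 2 * j ≤ d := by omega
        refine hne (ih (d - 2 * j) (by omega) (pq.1 + (j : ℤ), pq.2 + (j : ℤ))
          (show k ≤ pq.1 + (j : ℤ) by omega)
          (show 2 * k < pq.1 + (j : ℤ) + (pq.2 + (j : ℤ)) by omega)
          (show B ≤ pq.1 + (j : ℤ) + (pq.2 + (j : ℤ)) + ((d - 2 * j : ℕ) : ℤ) by omega))
      have h0 : cw pq = g pq := by
        have := hcw_single pq 0 (Finset.mem_range.mpr hn1) (fun j hj hj0 => hterm j hj hj0)
        simpa [hc_def] using this
      rw [← h0]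
      exact hW0 pq h2k
  have hu_supp : ∀ pq : ℤ × ℤ, g pq ≠ 0 → k ≤ pq.1 ∧ pq.1 + pq.2 ≤ 2 * k := by
    intro pq h
    refine ⟨hgk pq h, ?_⟩
    by_contra h2
    have hsB := hB pq h
    exact h (claimA (B - (pq.1 + pq.2)).toNat pq (hgk pq h) (by omega) (by omega))
  -- Claim B: the only component of u is at (k, k)
  have hgkk : ∀ pq : ℤ × ℤ, pq ≠ (k, k) → g pq = 0 := by
    intro pq₀ hne0
    by_contra hne
    obtain ⟨hk0, hs0⟩ := hu_supp pq₀ hne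
    have hq0 : pq₀.2 < k := by
      rcases lt_or_ge pq₀.2 k with h | h
      · exact h
      · exact absurd (Prod.ext_iff.mpr ⟨by omega, by omega⟩ : pq₀ = (k, k)) hne0
    set S' : Finset (ℤ × ℤ) := G'.filter (fun pq => pq.2 < k) with hS'_def
    have hS'ne : S'.Nonempty :=
      ⟨pq₀, Finset.mem_filter.mpr ⟨hg_fin.mem_toFinset.mpr hne, hq0⟩⟩
    obtain ⟨ab, habS, hmax⟩ := S'.exists_max_image (fun pq => pq.1 + pq.2) hS'ne
    have habG : g ab ≠ 0 := hg_fin.mem_toFinset.mp (Finset.mem_filter.mp habS).1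
    have habq : ab.2 < k := (Finset.mem_filter.mp habS).2
    obtain ⟨habk, habs⟩ := hu_supp ab habG
    -- step i : cw ab = g ab
    have hstep1 : cw ab = g ab := by
      have hterm : ∀ j ∈ Finset.range n, j ≠ 0 → g (ab.1 + (j : ℤ), ab.2 + (j : ℤ)) = 0 := by
        intro j _ hj0
        by_contra hgj
        obtain ⟨h1, h2⟩ := hu_supp _ hgj
        have h1' : k ≤ ab.1 + (j : ℤ) := h1
        have h2' : ab.1 + (j : ℤ) + (ab.2 + (j : ℤ)) ≤ 2 * k := h2
        by_cases hbk : ab.2 + (j : ℤ) < k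
        · have hmem : (ab.1 + (j : ℤ), ab.2 + (j : ℤ)) ∈ S' :=
            Finset.mem_filter.mpr ⟨hg_fin.mem_toFinset.mpr hgj, hbk⟩
          have hle : ab.1 + (j : ℤ) + (ab.2 + (j : ℤ)) ≤ ab.1 + ab.2 := hmax _ hmem
          omega
        · omega
      have := hcw_single ab 0 (Finset.mem_range.mpr hn1) hterm
      simpa [hc_def] using this
    -- step ii : cw (ab.2, ab.1) = 0
    have hstep2 : cw (ab.2, ab.1) = 0 := by
      simp only [hcw_def]
      refine Finset.sum_eq_zero fun j _ => ?_
      suffices hg0 : g (ab.2 + (j : ℤ), ab.1 + (j : ℤ)) = 0 by simp [hg0]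
      by_contra hgj
      obtain ⟨h1, h2⟩ := hu_supp _ hgj
      have h1' : k ≤ ab.2 + (j : ℤ) := h1
      have h2' : ab.2 + (j : ℤ) + (ab.1 + (j : ℤ)) ≤ 2 * k := h2
      omega
    -- step iii : reality forces g ab = 0
    have hσab := hσc (ab.1, ab.2)
    rw [hstep2, map_zero] at hσab
    exact habG (hstep1.symm.trans hσab.symm)
  -- the component of u
  set u₀ : V := g (k, k) with hu₀_def
  have hu_eq : u = u₀ := by
    rw [← hu_sum]
    exact finsum_eq_single _ (k, k) (fun pq h => hgkk pq h)
  have hu₀I : u₀ ∈ I k k := hg_mem (k, k)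
  -- cw (k, k) = u₀ and reality of u₀
  have hcw_kk : cw (k, k) = u₀ := by
    have := hcw_single (k, k) 0 (Finset.mem_range.mpr hn1) (fun j _ hj => by
      refine hgkk _ (fun h => hj ?_)
      have : (k : ℤ) + j = k := congrArg Prod.fst h
      omega)
    simpa [hc_def] using this
  have hσu₀ : σ u₀ = u₀ := by
    have := hσc (k, k)
    rwa [hcw_kk] at this
  -- N u₀ = 0
  have hNu₀ : N u₀ = 0 := by
    by_cases h2n : 2 ≤ n
    · have hterm : ∀ j ∈ Finset.range n, j ≠ 1 →
          g (k - 1 + (j : ℤ), k - 1 + (j : ℤ)) = 0 := by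
        intro j _ hj1
        refine hgkk _ fun h => ?_
        have h1 : k - 1 + (j : ℤ) = k := congrArg Prod.fst h
        omega
      have hsingle := hcw_single (k - 1, k - 1) 1 (Finset.mem_range.mpr (by omega)) hterm
      have e1 : k - 1 + ((1 : ℕ) : ℤ) = k := by push_cast; ring
      have hc1 : cw (k - 1, k - 1) = Complex.I • N u₀ := by
        rw [hsingle]
        rw [show ((k : ℤ) - 1 + ((1 : ℕ) : ℤ), (k : ℤ) - 1 + ((1 : ℕ) : ℤ)) = ((k : ℤ), (k : ℤ))
          from by rw [e1]]
        simp [hc_def, hu₀_def, pow_one]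
      have hσeq := hσc (k - 1, k - 1)
      rw [hc1] at hσeq
      have hL : σ (Complex.I • N u₀) = (-Complex.I) • N u₀ := by
        rw [map_smulₛₗ, show (starRingEnd ℂ) Complex.I = -Complex.I from Complex.conj_I]
        congr 1
        rw [← hNσ u₀, hσu₀]
      rw [hL] at hσeq
      have hzero : (Complex.I - -Complex.I) • N u₀ = 0 := by
        rw [sub_smul, hσeq, sub_self]
      have h2I : Complex.I - -Complex.I ≠ 0 := by
        rw [show Complex.I - -Complex.I = 2 * Complex.I from by ring]
        exact mul_ne_zero two_ne_zero Complex.I_ne_zero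
      exact (smul_eq_zero.mp hzero).resolve_left h2I
    · have hn1' : n = 1 := by omega
      have := hNn u₀
      rwa [hn1', pow_one] at this
  -- conclusion
  have hNju : ∀ j : ℕ, j ≠ 0 → (N ^ j) u = 0 := by
    intro j hj
    obtain ⟨m, rfl⟩ : ∃ m, j = m + 1 := ⟨j - 1, by omega⟩
    rw [pow_succ, Module.End.mul_apply, hu_eq, hNu₀, map_zero]
  have hw_eq_u : w = u := by
    rw [hwsum]
    have := finsum_eq_single (fun j : ℕ => (Complex.I ^ j / (j.factorial : ℂ)) • (N ^ j) u) 0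
      (fun j hj => by simp only [hNju j hj, smul_zero])
    simpa using this
  rw [hw_eq_u, hu_eq]
  exact ⟨hNu₀, hu₀I⟩
end

section
/- Assume τ₂ > 0 and k > 0. Then the matrix M is positive definite: Σ_{a,b=1}^4 M_{ab} g_a g_b > 0 for every nonzero g ∈ ℝ⁴. Moreover, for every nonzero integer vector g ∈ ℤ⁴ one has Σ_{a,b=1}^4 M_{ab} g_a g_b ≥ min(k, τ₂, 1/τ₂, 1/k). (Paper appendix D: the boundary Hodge norm at the conifold is a genuine norm, and nonzero quantized fluxes have boundary Hodge norm bounded below by an explicit constant λ, as in eq. (6.6).) -/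
/-!
Completing squares writes the quadratic form of `M` as
`τ₂ y₀² + k y₁² + k⁻¹ y₂² + τ₂⁻¹ y₃²` with `y₀ = x₀ - γ x₁`, `y₁ = x₁`,
`y₂ = x₂ + γ x₃ - δ x₀`, `y₃ = x₃ + (γ τ₁ - δ) x₁ - τ₁ x₀`.
The substitution `x ↦ y` is unitriangular for the order `x₁, x₀, x₃, x₂`, so at the first
nonzero `xⱼ` in that order `yⱼ = xⱼ`. Hence the form is positive on `x ≠ 0`, and on a nonzero
integer vector it is at least the weight of a square `yⱼ² = xⱼ² ≥ 1`.
-/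

open Finset

section WeightedSquares

variable {ι : Type*} [Fintype ι] {w y : ι → ℝ}

theorem weighted_sq_le_sum (hw : ∀ i, 0 ≤ w i) (j : ι) :
    w j * y j ^ 2 ≤ ∑ i, w i * y i ^ 2 :=
  single_le_sum (f := fun i => w i * y i ^ 2) (fun i _ => mul_nonneg (hw i) (sq_nonneg _))
    (mem_univ j)

theorem sum_weighted_sq_pos (hw : ∀ i, 0 < w i) {j : ι} (hj : y j ≠ 0) :
    0 < ∑ i, w i * y i ^ 2 :=
  (mul_pos (hw j) (by positivity)).trans_le (weighted_sq_le_sum (fun i => (hw i).le) j)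

theorem le_sum_weighted_sq_of_one_le_sq (hw : ∀ i, 0 ≤ w i) {j : ι} (hj : 1 ≤ y j ^ 2) :
    w j ≤ ∑ i, w i * y i ^ 2 :=
  (le_mul_of_one_le_right (hw j) hj).trans (weighted_sq_le_sum hw j)

end WeightedSquares

theorem Int.one_le_cast_sq {z : ℤ} (hz : z ≠ 0) : (1 : ℝ) ≤ (z : ℝ) ^ 2 :=
  one_le_sq_iff_one_le_abs _ |>.mpr (by exact_mod_cast Int.one_le_abs hz)

section Conifold

variable (τ₁ τ₂ γ δ k : ℝ)

noncomputable def conifoldHodgeMatrix : Matrix (Fin 4) (Fin 4) ℝ :=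
  !![(τ₁ ^ 2 + τ₂ ^ 2) / τ₂ + δ ^ 2 / k,
       (δ * τ₁ - γ * (τ₁ ^ 2 + τ₂ ^ 2)) / τ₂,
       -δ / k,
       -τ₁ / τ₂ - γ * δ / k;
     (δ * τ₁ - γ * (τ₁ ^ 2 + τ₂ ^ 2)) / τ₂,
       (γ ^ 2 * (τ₁ ^ 2 + τ₂ ^ 2) + δ ^ 2 + k * τ₂ - 2 * γ * δ * τ₁) / τ₂,
       0,
       (γ * τ₁ - δ) / τ₂;
     -δ / k, 0, 1 / k, γ / k;
     -τ₁ / τ₂ - γ * δ / k, (γ * τ₁ - δ) / τ₂, γ / k, 1 / τ₂ + γ ^ 2 / k]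

noncomputable def conifoldWeights : Fin 4 → ℝ := ![τ₂, k, k⁻¹, τ₂⁻¹]

noncomputable def conifoldCoords (x : Fin 4 → ℝ) : Fin 4 → ℝ :=
  ![x 0 - γ * x 1, x 1, x 2 + γ * x 3 - δ * x 0, x 3 + (γ * τ₁ - δ) * x 1 - τ₁ * x 0]

variable {τ₁ τ₂ γ δ k}

theorem conifoldHodgeMatrix_quadForm (hτ : τ₂ ≠ 0) (hk : k ≠ 0) (x : Fin 4 → ℝ) :
    ∑ a, ∑ b, conifoldHodgeMatrix τ₁ τ₂ γ δ k a b * x a * x b =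
      ∑ i, conifoldWeights τ₂ k i * conifoldCoords τ₁ γ δ x i ^ 2 := by
  simp only [conifoldHodgeMatrix, conifoldWeights, conifoldCoords, Fin.sum_univ_four,
    Matrix.of_apply, Matrix.cons_val', Matrix.cons_val_zero, Matrix.cons_val_one,
    Matrix.cons_val_two, Matrix.cons_val_three, Matrix.head_cons, Matrix.tail_cons,
    Matrix.empty_val', Matrix.cons_val_fin_one, Matrix.head_fin_const]
  field_simp
  ring

theorem conifoldWeights_pos (hτ : 0 < τ₂) (hk : 0 < k) (i : Fin 4) :
    0 < conifoldWeights τ₂ k i := by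
  fin_cases i <;> simp [conifoldWeights, hτ, hk]

theorem min_le_conifoldWeights (i : Fin 4) :
    min k (min τ₂ (min τ₂⁻¹ k⁻¹)) ≤ conifoldWeights τ₂ k i := by
  fin_cases i <;> simp [conifoldWeights]

theorem exists_conifoldCoords_eq_ne_zero {x : Fin 4 → ℝ} (hx : x ≠ 0) :
    ∃ j, x j ≠ 0 ∧ conifoldCoords τ₁ γ δ x j = x j := by
  by_cases h1 : x 1 = 0
  · by_cases h0 : x 0 = 0
    · by_cases h3 : x 3 = 0
      · have h2 : x 2 ≠ 0 := fun h2 => hx (funext fun i => by fin_cases i <;> assumption)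
        exact ⟨2, h2, by simp [conifoldCoords, h0, h3]⟩
      · exact ⟨3, h3, by simp [conifoldCoords, h0, h1]⟩
    · exact ⟨0, h0, by simp [conifoldCoords, h1]⟩
  · exact ⟨1, h1, by simp [conifoldCoords]⟩

end Conifold

/-- The boundary Hodge norm at a Type I₁ (conifold) degeneration is positive definite,
and nonzero quantized (integer) fluxes have boundary Hodge norm bounded below by the
explicit constant `min(k, τ₂, τ₂⁻¹, k⁻¹)`. -/
theorem conifold_boundary_hodge_norm_posdef_and_gap
    (τ₁ τ₂ γ δ k : ℝ) (hτ : 0 < τ₂) (hk : 0 < k)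
    (M : Matrix (Fin 4) (Fin 4) ℝ)
    (hM : M = !![(τ₁ ^ 2 + τ₂ ^ 2) / τ₂ + δ ^ 2 / k,
                   (δ * τ₁ - γ * (τ₁ ^ 2 + τ₂ ^ 2)) / τ₂,
                   -δ / k,
                   -τ₁ / τ₂ - γ * δ / k;
                 (δ * τ₁ - γ * (τ₁ ^ 2 + τ₂ ^ 2)) / τ₂,
                   (γ ^ 2 * (τ₁ ^ 2 + τ₂ ^ 2) + δ ^ 2 + k * τ₂ - 2 * γ * δ * τ₁) / τ₂,
                   0,
                   (γ * τ₁ - δ) / τ₂;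
                 -δ / k, 0, 1 / k, γ / k;
                 -τ₁ / τ₂ - γ * δ / k, (γ * τ₁ - δ) / τ₂, γ / k, 1 / τ₂ + γ ^ 2 / k]) :
    (∀ g : Fin 4 → ℝ, g ≠ 0 → 0 < ∑ a : Fin 4, ∑ b : Fin 4, M a b * g a * g b) ∧
    (∀ g : Fin 4 → ℤ, g ≠ 0 →
      min k (min τ₂ (min τ₂⁻¹ k⁻¹))
        ≤ ∑ a : Fin 4, ∑ b : Fin 4, M a b * (g a : ℝ) * (g b : ℝ)) := by
  obtain rfl : M = conifoldHodgeMatrix τ₁ τ₂ γ δ k := hM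
  have hw := conifoldWeights_pos hτ hk
  refine ⟨fun g hg => ?_, fun g hg => ?_⟩
  · obtain ⟨j, hgj, hyj⟩ := exists_conifoldCoords_eq_ne_zero (τ₁ := τ₁) (γ := γ) (δ := δ) hg
    rw [conifoldHodgeMatrix_quadForm hτ.ne' hk.ne']
    exact sum_weighted_sq_pos hw (hyj ▸ hgj)
  · have hx : (fun a => (g a : ℝ)) ≠ 0 := fun h =>
      hg (funext fun a => Int.cast_eq_zero.mp (congrFun h a))
    obtain ⟨j, hgj, hyj⟩ := exists_conifoldCoords_eq_ne_zero (τ₁ := τ₁) (γ := γ) (δ := δ) hx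
    rw [conifoldHodgeMatrix_quadForm hτ.ne' hk.ne']
    calc min k (min τ₂ (min τ₂⁻¹ k⁻¹)) ≤ conifoldWeights τ₂ k j := min_le_conifoldWeights j
      _ ≤ _ := le_sum_weighted_sq_of_one_le_sq (fun i => (hw i).le)
        (hyj ▸ Int.one_le_cast_sq (Int.cast_ne_zero.mp hgj))
end
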